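/- There exists N ∈ ℕ such that for all integers n ≥ N divisible by 6, one has Cov(n, n/3) < Cov(n, n/2). -/

import Mathlib

open Real

/-- Binomial coefficient with an integer lower index, with the convention that it
vanishes for negative lower index (and, via `Nat.choose`, above the upper index). -/
def ibinom (a : ℕ) (b : ℤ) : ℕ := if 0 ≤ b then a.choose b.toNat else 0

/-- The fold covariance of k-fold cross-validation of the Majority algorithm on `n`
i.i.d. uniformly random binary labels with fold size `m = n/k`:
`Cov(n, m) = 2^{-n} · Σ_{j=0}^{m-1} binom(m-1, j)² · binom(n-2m, ⌊(n-m)/2⌋ - j)`. -/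
noncomputable def Cov (n m : ℕ) : ℝ :=
  (2 : ℝ)⁻¹ ^ n * ∑ j ∈ Finset.range m,
    ((m - 1).choose j : ℝ) ^ 2 * (ibinom (n - 2 * m) (((n : ℤ) - m) / 2 - j) : ℝ)

/-!
For `n = 6t` both covariances carry the factor `2⁻ⁿ`; what remains is
`L = ∑ⱼ C(2t-1, j)² C(2t, j)` for `k = 3` and `R = C(3t-1, ⌊3t/2⌋)²` for `k = 2`.
Since `2 C(2t-1, j) ≤ C(2t, j)` above the middle and the terms below the middle are dominated
by their mirror images, `L ≤ ½ ∑_{u<t} C(2t, t+u)³`. The ratio of consecutive coefficients is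
`(1-x)/(1+x) ≤ e^{-2x}` with `x = (2u+1)/(2t+1)`, so `C(2t, t+u) ≤ C(2t, t) e^{-2u²/(2t+1)}`,
and comparing the Gaussian sum with its integral gives `L ≲ 64ᵗ/(4√3 π t)`.
Wallis' inequalities for the central binomial coefficient give `R ≳ 64ᵗ/(6π t)`,
and `4√3 > 6`.
-/

open Finset

theorem ibinom_zero_left (b : ℤ) : ibinom 0 b = if b = 0 then 1 else 0 := by
  unfold ibinom
  split_ifs with h₀ h
  · simp [h]
  · exact Nat.choose_eq_zero_of_lt (by omega)
  · omega
  · rfl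

theorem Cov_three_mul (m : ℕ) :
    Cov (3 * m) m =
      2⁻¹ ^ (3 * m) * ∑ j ∈ range m, ((m - 1).choose j : ℝ) ^ 2 * m.choose j := by
  rw [Cov, show 3 * m - 2 * m = m by omega]
  congr 1
  refine sum_congr rfl fun j hj => ?_
  have hj := mem_range.1 hj
  rw [ibinom, if_pos (by omega), show ((((3 * m : ℕ) : ℤ) - m) / 2 - j).toNat = m - j by omega,
    Nat.choose_symm hj.le]

theorem Cov_two_mul {m : ℕ} (hm : 0 < m) :
    Cov (2 * m) m = 2⁻¹ ^ (2 * m) * ((m - 1).choose (m / 2) : ℝ) ^ 2 := by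
  rw [Cov, show 2 * m - 2 * m = 0 by omega, sum_eq_single_of_mem (m / 2) (mem_range.2 (by omega))]
  · rw [ibinom_zero_left, if_pos (by omega)]
    simp
  · intro j _ hj
    rw [ibinom_zero_left, if_neg (by omega)]
    simp

theorem Real.Wallis.W_mul_centralBinom_sq (n : ℕ) :
    Wallis.W n * (2 * n + 1) * (n.centralBinom : ℝ) ^ 2 = 16 ^ n := by
  have hfac : (n.centralBinom : ℝ) * (n.factorial : ℝ) ^ 2 = (2 * n).factorial := by
    rw [Nat.centralBinom_eq_two_mul_choose, sq, ← mul_assoc]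
    exact_mod_cast two_mul n ▸ Nat.add_choose_mul_factorial_mul_factorial n n
  rw [Wallis.W_eq_factorial_ratio, ← hfac]
  have : (0 : ℝ) < n.factorial := by positivity
  have : (0 : ℝ) < n.centralBinom := by exact_mod_cast n.centralBinom_pos
  field_simp
  rw [pow_mul]; norm_num

theorem pi_mul_centralBinom_sq_le (n : ℕ) : π * n * (n.centralBinom : ℝ) ^ 2 ≤ 16 ^ n := by
  rw [← Wallis.W_mul_centralBinom_sq]
  have h := Wallis.le_W n
  have : (0 : ℝ) < 2 * n + 2 := by positivity
  rw [div_mul_eq_mul_div, div_le_iff₀ this] at h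
  have hc : (0 : ℝ) ≤ (n.centralBinom : ℝ) ^ 2 := by positivity
  nlinarith [mul_le_mul_of_nonneg_right h hc, pi_pos, Wallis.W_pos n]

theorem two_mul_sixteen_pow_le_pi_mul_centralBinom_sq (n : ℕ) :
    2 * 16 ^ n ≤ π * (2 * n + 1) * (n.centralBinom : ℝ) ^ 2 := by
  rw [← Wallis.W_mul_centralBinom_sq]
  have := Wallis.W_le n
  have hc : (0 : ℝ) ≤ (2 * n + 1) * (n.centralBinom : ℝ) ^ 2 := by positivity
  nlinarith [mul_le_mul_of_nonneg_right this hc]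

theorem two_mul_four_pow_le_pi_mul_choose_half_sq (n : ℕ) :
    2 * 4 ^ n ≤ π * (n + 2) * (n.choose (n / 2) : ℝ) ^ 2 := by
  obtain ⟨m, rfl | rfl⟩ := Nat.even_or_odd' n
  · have h := two_mul_sixteen_pow_le_pi_mul_centralBinom_sq m
    rw [Nat.centralBinom_eq_two_mul_choose] at h
    rw [show 2 * m / 2 = m by omega, pow_mul]
    norm_num
    nlinarith [pi_pos, sq_nonneg ((2 * m).choose m : ℝ)]
  · have hcb : ((m + 1).centralBinom : ℝ) = 2 * (2 * m + 1).choose m := by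
      rw [Nat.centralBinom_eq_two_mul_choose, show 2 * (m + 1) = 2 * m + 1 + 1 by ring,
        Nat.choose_succ_succ, Nat.choose_symm_half]
      push_cast; ring
    have h := two_mul_sixteen_pow_le_pi_mul_centralBinom_sq (m + 1)
    have h16 : (16 : ℝ) ^ (m + 1) = 4 * 4 ^ (2 * m + 1) := by
      rw [pow_succ, pow_succ, pow_mul]; norm_num; ring
    rw [hcb, h16] at h
    rw [show (2 * m + 1) / 2 = m by omega]
    push_cast at h ⊢
    nlinarith

theorem one_sub_div_one_add_le_exp {x : ℝ} (h0 : 0 ≤ x) (h1 : x < 1) :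
    (1 - x) / (1 + x) ≤ exp (-2 * x) := by
  have hlog : 2 * x ≤ log (1 + x) - log (1 - x) := by
    simpa using le_hasSum (hasSum_log_sub_log_of_abs_lt_one (abs_lt.2 ⟨by linarith, h1⟩)) 0
      fun k _ => by positivity
  rw [← exp_log (by linarith : 0 < 1 - x), ← exp_log (by linarith : 0 < 1 + x), ← exp_sub]
  exact exp_le_exp.2 (by linarith)

theorem choose_add_le_centralBinom_mul_exp {t u : ℕ} (hu : u ≤ t) :
    ((2 * t).choose (t + u) : ℝ) ≤ t.centralBinom * exp (-2 * u ^ 2 / (2 * t + 1)) := by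
  induction u with
  | zero => simp [Nat.centralBinom_eq_two_mul_choose]
  | succ u ih =>
    have hrec : ((2 * t).choose (t + u + 1) : ℝ) * (t + u + 1) =
        (2 * t).choose (t + u) * (t - u) := by
      have := Nat.choose_succ_right_eq (2 * t) (t + u)
      rw [show 2 * t - (t + u) = t - u by omega] at this
      rw [← Nat.cast_sub (by omega)]
      exact_mod_cast this
    set x : ℝ := (2 * u + 1) / (2 * t + 1)
    have hx1 : x < 1 := by
      rw [div_lt_one (by positivity)]
      exact_mod_cast (by omega : 2 * u + 1 < 2 * t + 1)
    have hratio : ((2 * t).choose (t + (u + 1)) : ℝ) =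
        (2 * t).choose (t + u) * ((1 - x) / (1 + x)) := by
      have : (0 : ℝ) < t + u + 1 := by positivity
      rw [← add_assoc]
      simp only [x]
      field_simp
      linear_combination 2 * hrec
    calc ((2 * t).choose (t + (u + 1)) : ℝ)
        ≤ t.centralBinom * exp (-2 * u ^ 2 / (2 * t + 1)) * exp (-2 * x) := by
          rw [hratio]
          gcongr
          · exact ih (by omega)
          · exact one_sub_div_one_add_le_exp (by positivity) hx1
      _ = t.centralBinom * exp (-2 * ((u + 1 : ℕ) : ℝ) ^ 2 / (2 * t + 1)) := by
          rw [mul_assoc, ← exp_add]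
          congr 2
          simp only [x]
          push_cast
          ring

theorem sum_range_exp_neg_mul_sq_le {b : ℝ} (hb : 0 < b) (w : ℕ) :
    ∑ u ∈ range w, exp (-b * u ^ 2) ≤ 1 + √(π / b) / 2 := by
  set f : ℝ → ℝ := fun x => exp (-b * x ^ 2)
  have hanti : AntitoneOn f (Set.Icc 0 (0 + w)) := fun x hx y _ hxy =>
    exp_le_exp.2 (by nlinarith [pow_le_pow_left₀ hx.1 hxy 2])
  have hint : ∫ x in (0 : ℝ)..(0 + w), f x ≤ √(π / b) / 2 := by
    rw [← integral_gaussian_Ioi, zero_add, intervalIntegral.integral_of_le (by positivity)]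
    exact MeasureTheory.setIntegral_mono_set (integrable_exp_neg_mul_sq hb).integrableOn
      (.of_forall fun x => (exp_pos _).le) (.of_forall fun x hx => hx.1)
  calc ∑ u ∈ range w, f u
      ≤ ∑ u ∈ range (w + 1), f u :=
        sum_le_sum_of_subset_of_nonneg (range_subset_range.2 w.le_succ) fun _ _ _ => (exp_pos _).le
    _ = ∑ i ∈ range w, f (0 + ↑(i + 1)) + 1 := by simp [sum_range_succ', f]
    _ ≤ 1 + √(π / b) / 2 := by linarith [hanti.sum_le_integral]

theorem Nat.two_mul_choose_le_choose_succ {n k : ℕ} (h : n + 1 ≤ 2 * k) :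
    2 * n.choose k ≤ (n + 1).choose k := by
  have := Nat.choose_mul_succ_eq n k
  refine Nat.le_of_mul_le_mul_right ?_ n.succ_pos
  calc 2 * n.choose k * (n + 1) = (n + 1).choose k * (2 * (n + 1 - k)) := by
        rw [mul_assoc, this]; ring
    _ ≤ (n + 1).choose k * (n + 1) := Nat.mul_le_mul_left _ (by omega)

theorem sum_choose_pred_sq_mul_choose_le_sum_cube (t : ℕ) :
    ∑ j ∈ range (2 * t), ((2 * t - 1).choose j : ℝ) ^ 2 * (2 * t).choose j ≤
      1 / 2 * ∑ u ∈ range t, ((2 * t).choose (t + u) : ℝ) ^ 3 := by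
  set f : ℕ → ℝ := fun j => ((2 * t - 1).choose j : ℝ) ^ 2 * (2 * t).choose j
  have hupper : ∀ u < t, f (t + u) ≤ 1 / 4 * ((2 * t).choose (t + u) : ℝ) ^ 3 := by
    intro u hu
    have h := Nat.two_mul_choose_le_choose_succ (n := 2 * t - 1) (k := t + u) (by omega)
    rw [Nat.sub_add_cancel (by omega)] at h
    have h' : 2 * ((2 * t - 1).choose (t + u) : ℝ) ≤ (2 * t).choose (t + u) := by
      exact_mod_cast h
    simp only [f]
    nlinarith [pow_le_pow_left₀ (by positivity) h' 2, sq_nonneg ((2 * t).choose (t + u) : ℝ)]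
  have hreflect : ∀ u < t, f (t - 1 - u) ≤ f (t + u) := by
    intro u hu
    have h1 : (2 * t - 1).choose (t - 1 - u) = (2 * t - 1).choose (t + u) :=
      Nat.choose_symm_of_eq_add (by omega)
    have h2 : (2 * t).choose (t - 1 - u) ≤ (2 * t).choose (t + u) := by
      rw [← Nat.choose_symm_of_eq_add (show 2 * t = t - u + (t + u) by omega)]
      convert Nat.choose_le_succ_of_lt_half_left (show t - 1 - u < 2 * t / 2 by omega) using 2
      omega
    simp only [f, h1]
    gcongr
  calc ∑ j ∈ range (2 * t), f j = ∑ u ∈ range t, (f (t - 1 - u) + f (t + u)) := by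
        rw [two_mul, sum_range_add, sum_add_distrib, sum_range_reflect]
    _ ≤ ∑ u ∈ range t, 1 / 2 * ((2 * t).choose (t + u) : ℝ) ^ 3 := by
        refine sum_le_sum fun u hu => ?_
        have hu := mem_range.1 hu
        linarith [hreflect u hu, hupper u hu]
    _ = _ := (mul_sum ..).symm

theorem sum_choose_pred_sq_mul_choose_le_centralBinom_cube (t : ℕ) :
    ∑ j ∈ range (2 * t), ((2 * t - 1).choose j : ℝ) ^ 2 * (2 * t).choose j ≤
      1 / 2 * (t.centralBinom : ℝ) ^ 3 * (1 + √(π * (2 * t + 1) / 6) / 2) := by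
  set b : ℝ := 6 / (2 * t + 1)
  have hb : 0 < b := by positivity
  calc _ ≤ 1 / 2 * ∑ u ∈ range t, ((2 * t).choose (t + u) : ℝ) ^ 3 :=
        sum_choose_pred_sq_mul_choose_le_sum_cube t
    _ ≤ 1 / 2 * ∑ u ∈ range t, (t.centralBinom : ℝ) ^ 3 * exp (-b * u ^ 2) := by
        gcongr with u hu
        calc ((2 * t).choose (t + u) : ℝ) ^ 3
            ≤ (t.centralBinom * exp (-2 * u ^ 2 / (2 * t + 1))) ^ 3 :=
              pow_le_pow_left₀ (by positivity)
                (choose_add_le_centralBinom_mul_exp (mem_range.1 hu).le) 3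
          _ = _ := by
              rw [mul_pow, ← exp_nat_mul]
              congr 2
              push_cast
              ring
    _ = 1 / 2 * (t.centralBinom : ℝ) ^ 3 * ∑ u ∈ range t, exp (-b * u ^ 2) := by
        rw [← mul_sum, mul_assoc]
    _ ≤ _ := by
        gcongr
        exact (sum_range_exp_neg_mul_sq_le hb t).trans_eq (by rw [div_div_eq_mul_div])

theorem one_add_sqrt_sq_mul_sq_lt_pi_mul_pow_three {t : ℝ} (ht : 4000 ≤ t) :
    (1 + √(π * (2 * t + 1) / 6) / 2) ^ 2 * (3 * t + 1) ^ 2 < π * t ^ 3 := by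
  have hπ := pi_lt_d2
  have hπ' := pi_gt_three
  set s := √(π * (2 * t + 1) / 6)
  have hs0 : 0 ≤ s := sqrt_nonneg _
  have hs2 : s ^ 2 = π * (2 * t + 1) / 6 := sq_sqrt (by positivity)
  have hs : s ≤ t / 40 := sqrt_le_iff.2 ⟨by positivity, by nlinarith⟩
  have hG : (1 + s / 2) ^ 2 ≤ 1 + t / 40 + π * (2 * t + 1) / 24 := by nlinarith
  calc (1 + s / 2) ^ 2 * (3 * t + 1) ^ 2
      ≤ (1 + t / 40 + π * (2 * t + 1) / 24) * (3 * t + 1) ^ 2 := by gcongr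
    _ < π * t ^ 3 := by
        -- the cubic coefficient on the left is `9/40 + 3π/4 < π`
        have ht0 : 0 ≤ t := by linarith
        nlinarith [mul_nonneg (sub_nonneg.2 hπ'.le) (pow_nonneg ht0 3),
          mul_nonneg (sub_nonneg.2 hπ.le) (pow_nonneg ht0 2), mul_nonneg (sub_nonneg.2 hπ.le) ht0,
          mul_le_mul_of_nonneg_left ht (pow_nonneg ht0 2), mul_le_mul_of_nonneg_left ht ht0]

theorem sum_choose_pred_sq_mul_choose_lt_choose_sq {t : ℕ} (ht : 4000 ≤ t) :
    ∑ j ∈ range (2 * t), ((2 * t - 1).choose j : ℝ) ^ 2 * (2 * t).choose j <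
      ((3 * t - 1).choose (3 * t / 2) : ℝ) ^ 2 := by
  set c : ℝ := (t.centralBinom : ℝ)
  set G : ℝ := 1 + √(π * (2 * t + 1) / 6) / 2
  set R : ℝ := ((3 * t - 1).choose (3 * t / 2) : ℝ) ^ 2
  have htR : (4000 : ℝ) ≤ t := by exact_mod_cast ht
  have hc : 0 < c := Nat.cast_pos.2 t.centralBinom_pos
  have hG : 0 < G := by positivity
  have hR : 64 ^ t ≤ 2 * π * (3 * t + 1) * R := by
    have h := two_mul_four_pow_le_pi_mul_choose_half_sq (3 * t - 1)
    rw [Nat.choose_symm_of_eq_add (show 3 * t - 1 = (3 * t - 1) / 2 + 3 * t / 2 by omega),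
      Nat.cast_sub (by omega)] at h
    have h64 : (64 : ℝ) ^ t = 4 * 4 ^ (3 * t - 1) := by
      rw [← pow_succ', show 3 * t - 1 + 1 = 3 * t by omega, pow_mul]
      norm_num
    push_cast at h
    linarith
  have hcube : c ^ 3 * G * (π * (3 * t + 1)) < 64 ^ t := by
    have hct := pi_mul_centralBinom_sq_le t
    have hπt : 0 < π * t ^ 3 := by positivity
    refine lt_of_pow_lt_pow_left₀ 2 (by positivity) ?_
    calc (c ^ 3 * G * (π * (3 * t + 1))) ^ 2
        = (π * t * c ^ 2) ^ 3 * (G ^ 2 * (3 * t + 1) ^ 2) / (π * t ^ 3) := by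
          field_simp
      _ < (π * t * c ^ 2) ^ 3 * (π * t ^ 3) / (π * t ^ 3) := by
          have := one_add_sqrt_sq_mul_sq_lt_pi_mul_pow_three htR
          gcongr ?_ / _
          exact mul_lt_mul_of_pos_left this (by positivity)
      _ = (π * t * c ^ 2) ^ 3 := by field_simp
      _ ≤ (16 ^ t) ^ 3 := by gcongr
      _ = (64 ^ t) ^ 2 := by
          rw [← pow_mul, ← pow_mul, mul_comm t 3, mul_comm t 2, pow_mul, pow_mul]
          norm_num
  calc _ ≤ 1 / 2 * c ^ 3 * G := sum_choose_pred_sq_mul_choose_le_centralBinom_cube t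
    _ < R := by
        have hpos : 0 < 2 * π * (3 * t + 1) := by positivity
        refine lt_of_mul_lt_mul_left ?_ hpos.le
        calc 2 * π * (3 * t + 1) * (1 / 2 * c ^ 3 * G) = c ^ 3 * G * (π * (3 * t + 1)) := by
              ring
          _ < 64 ^ t := hcube
          _ ≤ _ := hR

/-- **Endpoint comparison `k = 3` versus `k = 2`.**
For all sufficiently large `n` divisible by `6`, `Cov(n, n/3) < Cov(n, n/2)`. -/
theorem cov_third_lt_half :
    ∃ N : ℕ, ∀ n : ℕ, N ≤ n → 6 ∣ n → Cov n (n / 3) < Cov n (n / 2) := by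
  refine ⟨24000, fun n hn ⟨t, hnt⟩ => ?_⟩
  subst hnt
  have hthird : Cov (6 * t) (6 * t / 3) = 2⁻¹ ^ (6 * t) *
      ∑ j ∈ range (2 * t), ((2 * t - 1).choose j : ℝ) ^ 2 * (2 * t).choose j := by
    rw [show 6 * t / 3 = 2 * t by omega, show 6 * t = 3 * (2 * t) by ring, Cov_three_mul]
  have hhalf : Cov (6 * t) (6 * t / 2) =
      2⁻¹ ^ (6 * t) * ((3 * t - 1).choose (3 * t / 2) : ℝ) ^ 2 := by
    rw [show 6 * t / 2 = 3 * t by omega, show 6 * t = 2 * (3 * t) by ring, Cov_two_mul (by omega)]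
  rw [hthird, hhalf]
  exact mul_lt_mul_of_pos_left (sum_choose_pred_sq_mul_choose_lt_choose_sq (by omega))
    (by positivity)
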